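/- arXiv:2004.14063 — 2 statements merged into one kernel-verified Lean document; each statement's English description precedes it below -/
import Mathlib

section
/- Let δ be an expansion function on L and φ : L → L a function with φ(a) ≤ a and φ(a) ≤ a³ for all a ∈ L. If a proper element q ∈ L is φ-δ-primary, then q is φ_n-δ-primary for every integer n ≥ 2. -/
open CompleteLattice

variable {L : Type*} [CompleteLattice L] [CommMonoid L]

/-- `L` is a compactly generated multiplicative lattice: multiplication distributes over
arbitrary joins, the top element is the multiplicative identity, `1` is a compact element,
every element is a join of compact elements, and products of compact elements are compact. -/
def IsCGMultLattice (L : Type*) [CompleteLattice L] [CommMonoid L] : Prop :=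
  (∀ (a : L) (S : Set L), a * sSup S = ⨆ b ∈ S, a * b) ∧
  ((1 : L) = ⊤) ∧
  IsCompactElement (1 : L) ∧
  (∀ a : L, a = sSup {x : L | IsCompactElement x ∧ x ≤ a}) ∧
  (∀ x y : L, IsCompactElement x → IsCompactElement y →
    IsCompactElement (x * y))

/-- An expansion function on `L`: `a ≤ δ a` and `δ` is monotone. -/
def IsExpansion (δ : L → L) : Prop :=
  (∀ a : L, a ≤ δ a) ∧ ∀ a b : L, a ≤ b → δ a ≤ δ b

/-- A proper element `p` is `φ`-`δ`-primary if `a*b ≤ p` and `a*b ≰ φ p` imply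
`a ≤ p` or `b ≤ δ p`. -/
def IsPhiDeltaPrimary (φ δ : L → L) (p : L) : Prop :=
  p < 1 ∧ ∀ a b : L, a * b ≤ p → ¬ a * b ≤ φ p → a ≤ p ∨ b ≤ δ p

/-- A proper element `p` is `δ`-primary if `a*b ≤ p` implies `a ≤ p` or `b ≤ δ p`. -/
def IsDeltaPrimary (δ : L → L) (p : L) : Prop :=
  p < 1 ∧ ∀ a b : L, a * b ≤ p → a ≤ p ∨ b ≤ δ p

/-- A proper element `p` is `φ`-prime if `a*b ≤ p` and `a*b ≰ φ p` imply
`a ≤ p` or `b ≤ p`. -/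
def IsPhiPrime (φ : L → L) (p : L) : Prop :=
  p < 1 ∧ ∀ a b : L, a * b ≤ p → ¬ a * b ≤ φ p → a ≤ p ∨ b ≤ p

/-- The residual `(a : b)`, the join of all `x` with `x * b ≤ a`. -/
def lres (a b : L) : L := sSup {x : L | x * b ≤ a}

/-- The radical `√a`, the join of all compact `x` with `x ^ n ≤ a` for some `n ≥ 1`. -/
def lradical (a : L) : L :=
  sSup {x : L | IsCompactElement x ∧ ∃ n : ℕ, 0 < n ∧ x ^ n ≤ a}

/-- A principal element of a multiplicative lattice. -/
def IsPrincipalElem (e : L) : Prop :=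
  ∀ a b : L, a ⊓ b * e = (lres a e ⊓ b) * e ∧ lres (a * e ⊔ b) e = lres b e ⊔ a

/-- A Noether lattice: modular, principally generated, satisfying the ascending
chain condition. -/
def IsNoetherLattice (L : Type*) [CompleteLattice L] [CommMonoid L] : Prop :=
  IsModularLattice L ∧ (∀ a : L, a = sSup {e : L | IsPrincipalElem e ∧ e ≤ a}) ∧
  WellFoundedGT L

/-- A maximal element: proper, and `m < x ≤ 1` implies `x = 1`. -/
def IsMaximalElem (m : L) : Prop :=
  m < 1 ∧ ∀ x : L, m < x → x ≤ 1 → x = 1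

/-! If `q` is not already `δ`-primary, a witness `a * b ≤ q` with `a ≰ q`, `b ≰ δ q` enlarges to
`(a ⊔ q) * (b ⊔ q) ≤ q`, which `φ`-`δ`-primality forces below `φ q`; hence `q ^ 2 ≤ φ q ≤ q ^ 3`.
As `q ≤ 1`, the powers of `q` are then constant from `q ^ 2` on, so `φ q ≤ q ^ n` for all `n ≥ 2`,
and enlarging the exceptional element `φ q` to `q ^ n` only weakens the primality condition. -/

theorem pow_eq_sq_of_sq_le_pow_three {M : Type*} [Monoid M] [PartialOrder M] [MulLeftMono M]
    {q : M} (hq : q ≤ 1) (h : q ^ 2 ≤ q ^ 3) {n : ℕ} (hn : 2 ≤ n) : q ^ n = q ^ 2 := by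
  have hcube : q ^ 3 = q ^ 2 := le_antisymm (pow_le_pow_right_of_le_one' hq (by norm_num)) h
  induction n, hn using Nat.le_induction with
  | base => rfl
  | succ n _ ih => rw [pow_succ, ih, ← pow_succ, hcube]

namespace IsCGMultLattice

theorem mul_sup (hL : IsCGMultLattice L) (a x y : L) : a * (x ⊔ y) = a * x ⊔ a * y := by
  rw [← sSup_pair, hL.1, iSup_pair]

theorem le_one (hL : IsCGMultLattice L) (a : L) : a ≤ 1 :=
  hL.2.1 ▸ le_top

theorem isOrderedMonoid (hL : IsCGMultLattice L) : IsOrderedMonoid L where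
  mul_le_mul_left x y hxy a := by
    rw [mul_comm x, mul_comm y, ← sup_eq_right, ← hL.mul_sup, sup_eq_right.mpr hxy]

end IsCGMultLattice

theorem IsDeltaPrimary.isPhiDeltaPrimary {δ : L → L} {q : L} (hq : IsDeltaPrimary δ q)
    (φ : L → L) : IsPhiDeltaPrimary φ δ q :=
  ⟨hq.1, fun a b hab _ => hq.2 a b hab⟩

theorem IsPhiDeltaPrimary.of_le {φ ψ δ : L → L} {q : L} (hq : IsPhiDeltaPrimary φ δ q)
    (hφψ : φ q ≤ ψ q) : IsPhiDeltaPrimary ψ δ q :=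
  ⟨hq.1, fun a b hab hψ => hq.2 a b hab fun hφ => hψ (hφ.trans hφψ)⟩

theorem IsPhiDeltaPrimary.sq_le_of_not_isDeltaPrimary (hL : IsCGMultLattice L)
    {φ δ : L → L} {q : L} (hq : IsPhiDeltaPrimary φ δ q) (hδq : ¬ IsDeltaPrimary δ q) :
    q ^ 2 ≤ φ q := by
  have := hL.isOrderedMonoid
  obtain ⟨a, b, hab, ha, hb⟩ : ∃ a b : L, a * b ≤ q ∧ ¬ a ≤ q ∧ ¬ b ≤ δ q := by
    simpa [IsDeltaPrimary, hq.1] using hδq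
  have hle : (a ⊔ q) * (b ⊔ q) ≤ q := by
    rw [hL.mul_sup, mul_comm _ b, hL.mul_sup, mul_comm b a]
    exact sup_le (sup_le hab (mul_le_of_le_one_left' (hL.le_one b)))
      (mul_le_of_le_one_left' (hL.le_one _))
  have hφ : (a ⊔ q) * (b ⊔ q) ≤ φ q := by
    by_contra hφ
    rcases hq.2 _ _ hle hφ with h | h
    · exact ha (le_sup_left.trans h)
    · exact hb (le_sup_left.trans h)
  calc q ^ 2 = q * q := sq q
    _ ≤ (a ⊔ q) * (b ⊔ q) := mul_le_mul' le_sup_right le_sup_right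
    _ ≤ φ q := hφ

theorem phi_le_cube_implies_phiN_general (hL : IsCGMultLattice L)
    (δ φ : L → L)
    (hφ3 : ∀ a : L, φ a ≤ a ^ 3)
    (q : L) (hq : IsPhiDeltaPrimary φ δ q) :
    ∀ n : ℕ, 2 ≤ n → IsPhiDeltaPrimary (fun a : L => a ^ n) δ q := by
  intro n hn
  by_cases hδq : IsDeltaPrimary δ q
  · exact hδq.isPhiDeltaPrimary _
  have := hL.isOrderedMonoid
  have hsq : q ^ 2 ≤ q ^ 3 := (hq.sq_le_of_not_isDeltaPrimary hL hδq).trans (hφ3 q)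
  refine hq.of_le ?_
  calc φ q ≤ q ^ 3 := hφ3 q
    _ = q ^ 2 := pow_eq_sq_of_sq_le_pow_three (hL.le_one q) hsq (by norm_num)
    _ = q ^ n := (pow_eq_sq_of_sq_le_pow_three (hL.le_one q) hsq hn).symm

theorem phi_le_cube_implies_phiN (hL : IsCGMultLattice L)
    (δ φ : L → L) (hδ : IsExpansion δ) (hφ : ∀ a : L, φ a ≤ a)
    (hφ3 : ∀ a : L, φ a ≤ a ^ 3)
    (q : L) (hq : IsPhiDeltaPrimary φ δ q) :
    ∀ n : ℕ, 2 ≤ n → IsPhiDeltaPrimary (fun a : L => a ^ n) δ q :=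
  phi_le_cube_implies_phiN_general hL δ φ hφ3 q hq
end

section
/- Let δ be an expansion function on L and φ : L → L a function with φ(a) ≤ a for all a ∈ L. Let p ∈ L be a φ-δ-primary element and q ∈ L with q ≰ p (so that (p : q) is proper). If (φ(p) : q) ≤ φ((p : q)), then (p : q) is φ-δ-primary. -/
open CompleteLattice

variable {L : Type*} [CompleteLattice L] [CommMonoid L]

/-! A product `a * b` lies below `(p : q)` exactly when `(a * q) * b` lies below `p`, so the
`φ`-`δ`-primary property of `p`, applied to `a * q` and `b`, transfers to `(p : q)`; the
hypothesis `(φ p : q) ≤ φ (p : q)` is what keeps `(a * q) * b` outside `φ p`. -/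

theorem mul_sup_of_mul_sSup (hdist : ∀ (a : L) (S : Set L), a * sSup S = ⨆ b ∈ S, a * b)
    (a b c : L) : a * (b ⊔ c) = a * b ⊔ a * c := by
  rw [← sSup_pair, hdist, iSup_pair]

theorem mul_le_mul_left_of_mul_sSup
    (hdist : ∀ (a : L) (S : Set L), a * sSup S = ⨆ b ∈ S, a * b)
    {b c : L} (h : b ≤ c) (a : L) : a * b ≤ a * c := by
  rw [← sup_eq_right.mpr h, mul_sup_of_mul_sSup hdist]
  exact le_sup_left

theorem lres_mul_le (hdist : ∀ (a : L) (S : Set L), a * sSup S = ⨆ b ∈ S, a * b)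
    (a b : L) : lres a b * b ≤ a := by
  rw [lres, mul_comm, hdist]
  exact iSup₂_le fun x hx => (mul_comm b x).trans_le hx

theorem le_lres_iff (hdist : ∀ (a : L) (S : Set L), a * sSup S = ⨆ b ∈ S, a * b)
    {a b x : L} : x ≤ lres a b ↔ x * b ≤ a := by
  refine ⟨fun h => ?_, fun h => le_sSup h⟩
  calc x * b = b * x := mul_comm _ _
    _ ≤ b * lres a b := mul_le_mul_left_of_mul_sSup hdist h b
    _ = lres a b * b := mul_comm _ _
    _ ≤ a := lres_mul_le hdist a b

theorem lres_lt_one_iff (hdist : ∀ (a : L) (S : Set L), a * sSup S = ⨆ b ∈ S, a * b)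
    (hone : (1 : L) = ⊤) {a b : L} : lres a b < 1 ↔ ¬ b ≤ a := by
  rw [hone, lt_top_iff_ne_top, ne_eq, ← top_le_iff, ← hone, le_lres_iff hdist, one_mul]

theorem le_lres_self (hdist : ∀ (a : L) (S : Set L), a * sSup S = ⨆ b ∈ S, a * b)
    (hone : (1 : L) = ⊤) (a b : L) : a ≤ lres a b :=
  (le_lres_iff hdist).mpr <| calc
    a * b ≤ a * 1 := mul_le_mul_left_of_mul_sSup hdist (hone ▸ le_top) a
    _ = a := mul_one a

theorem residual_phiDeltaPrimary_general (hL : IsCGMultLattice L)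
    (δ φ : L → L) (hδ : IsExpansion δ)
    (p : L) (hp : IsPhiDeltaPrimary φ δ p) (q : L) (hq : ¬ q ≤ p)
    (hres : lres (φ p) q ≤ φ (lres p q)) :
    IsPhiDeltaPrimary φ δ (lres p q) := by
  obtain ⟨hdist, hone, -, -, -⟩ := hL
  have shift : ∀ {a b r : L}, a * b ≤ lres r q ↔ a * q * b ≤ r := fun {a b r} => by
    rw [le_lres_iff hdist, mul_right_comm]
  refine ⟨(lres_lt_one_iff hdist hone).mpr hq, fun a b hab hnab => ?_⟩
  have hnphi : ¬ a * q * b ≤ φ p := fun h => hnab ((shift.mpr h).trans hres)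
  rcases hp.2 (a * q) b (shift.mp hab) hnphi with h | h
  · exact Or.inl ((le_lres_iff hdist).mpr h)
  · exact Or.inr (h.trans (hδ.2 p _ (le_lres_self hdist hone p q)))

theorem residual_phiDeltaPrimary (hL : IsCGMultLattice L)
    (δ φ : L → L) (hδ : IsExpansion δ) (hφ : ∀ a : L, φ a ≤ a)
    (p : L) (hp : IsPhiDeltaPrimary φ δ p) (q : L) (hq : ¬ q ≤ p)
    (hres : lres (φ p) q ≤ φ (lres p q)) :
    IsPhiDeltaPrimary φ δ (lres p q) :=
  residual_phiDeltaPrimary_general hL δ φ hδ p hp q hq hres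
end
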